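/- Let T be a rose tree with n nodes and preorder listing v₁,…,v_n. For 1 ≤ i ≤ n let p_i be the position of the i-th '(' in F(T) and q_i the position of its matching ')'. Then for all i ≠ j, the pair for v_i precedes the pair for v_j (that is, q_i < p_j) if and only if v_i and v_j are not related in T and i < j. -/

import Mathlib

/-- A rooted ordered tree (rose tree): a node together with a finite list of child subtrees. -/
inductive RoseTree where
  | node : List RoseTree → RoseTree

namespace RoseTree

mutual
/-- The folklore encoding over the alphabet {(, )}, with `true` = '(' and `false` = ')':
`F (node [t₁,…,t_k]) = '(' ++ F t₁ ++ ⋯ ++ F t_k ++ ')'`. -/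
def F : RoseTree → List Bool
  | .node ts => true :: FList ts ++ [false]
def FList : List RoseTree → List Bool
  | [] => []
  | t :: ts => F t ++ FList ts
end

mutual
/-- The list of nodes of a rose tree in preorder, where each node is identified with
its path from the root (the list of child indices taken along the way). -/
def preorderPaths : RoseTree → List (List ℕ)
  | .node ts => [] :: preorderPathsAux 0 ts
def preorderPathsAux : ℕ → List RoseTree → List (List ℕ)
  | _, [] => []
  | k, t :: ts => ((preorderPaths t).map (fun p => k :: p)) ++ preorderPathsAux (k+1) ts
end

mutual
/-- The number of nodes of a rose tree: 1 plus the sum over children. -/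
def size : RoseTree → ℕ
  | .node ts => 1 + sizeList ts
def sizeList : List RoseTree → ℕ
  | [] => 0
  | t :: ts => size t + sizeList ts
end

end RoseTree

/-- A string over {(, )} is balanced if it has equally many '(' and ')' and every
prefix has at least as many '(' as ')'. -/
def BalancedParen (s : List Bool) : Prop :=
  s.count true = s.count false ∧ ∀ k : ℕ, (s.take k).count false ≤ (s.take k).count true

/-- The contiguous substring of `S` from position `p` to position `q`, inclusive. -/
def seg (S : List Bool) (p q : ℕ) : List Bool := (S.drop p).take (q + 1 - p)

/-- `IsMatch S p q` : the parenthesis at position `q` is the matching close parenthesis of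
the open parenthesis at position `p`, i.e. `q` is the least position `> p` such that the
substring of `S` from `p` to `q` (inclusive) is balanced. -/
def IsMatch (S : List Bool) (p q : ℕ) : Prop :=
  p < q ∧ q < S.length ∧ BalancedParen (seg S p q) ∧
    ∀ r : ℕ, p < r → r < q → ¬ BalancedParen (seg S p r)

/-- `IsNthOpen S i p` : position `p` holds the `i`-th '(' of `S` (1-based `i`). -/
def IsNthOpen (S : List Bool) (i p : ℕ) : Prop :=
  p < S.length ∧ S.getD p false = true ∧ (S.take p).count true = i - 1

namespace RoseTree

mutual
theorem length_F (t : RoseTree) : (F t).length = 2 * size t := by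
  match t with
  | .node ts => simp [F, size, length_FList ts]; ring
theorem length_FList (ts : List RoseTree) : (FList ts).length = 2 * sizeList ts := by
  match ts with
  | [] => simp [FList, sizeList]
  | t :: ts => simp [FList, sizeList, length_F t, length_FList ts]; ring
end

theorem one_le_size (t : RoseTree) : 1 ≤ size t := by
  cases t with | node ts => simp [size]

mutual
theorem count_F (t : RoseTree) :
    (F t).count true = size t ∧ (F t).count false = size t := by
  match t with
  | .node ts =>
    have := count_FList ts
    simp [F, size, List.count_append, this.1, this.2]; omega
theorem count_FList (ts : List RoseTree) :
    (FList ts).count true = sizeList ts ∧ (FList ts).count false = sizeList ts := by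
  match ts with
  | [] => simp [FList, sizeList]
  | t :: ts =>
    have h1 := count_F t
    have h2 := count_FList ts
    simp [FList, sizeList, List.count_append, h1.1, h1.2, h2.1, h2.2]
end

mutual
theorem take_F (t : RoseTree) (k : ℕ) :
    ((F t).take k).count false ≤ ((F t).take k).count true ∧
      (0 < k → k < 2 * size t → ((F t).take k).count false < ((F t).take k).count true) := by
  match t with
  | .node ts =>
    match k with
    | 0 => simp
    | (m+1) =>
      have hlen : (FList ts).length = 2 * sizeList ts := length_FList ts
      have hw := take_FList ts m
      rw [F]
      rw [show (true :: FList ts ++ [false]) = true :: (FList ts ++ [false]) by simp]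
      rw [List.take_succ_cons, List.take_append]
      by_cases hm : m ≤ (FList ts).length
      · have : m - (FList ts).length = 0 := by omega
        rw [this]
        simp [List.count_cons]
        omega
      · have h1 : ([false] : List Bool).take (m - (FList ts).length) = [false] := by
          apply List.take_of_length_le; simp; omega
        rw [h1]
        constructor
        · simp [List.count_cons, List.count_append]
          have hW := take_FList ts m
          omega
        · intro _ hk
          simp [size] at hk
          omega
theorem take_FList (ts : List RoseTree) (k : ℕ) :
    ((FList ts).take k).count false ≤ ((FList ts).take k).count true := by
  match ts with
  | [] => simp [FList]
  | t :: ts =>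
    rw [FList, List.take_append]
    simp only [List.count_append]
    have h1 : ((F t).take k).count false ≤ ((F t).take k).count true := by
      by_cases hk : k ≤ (F t).length
      · exact (take_F t k).1
      · rw [List.take_of_length_le (by omega)]
        have := count_F t
        omega
    have h2 := take_FList ts (k - (F t).length)
    omega
end

end RoseTree
namespace RoseTree

theorem balanced_F (t : RoseTree) : BalancedParen (F t) := by
  refine ⟨?_, fun k => (take_F t k).1⟩
  have := count_F t; omega

theorem not_balanced_take (t : RoseTree) (k : ℕ) (h0 : 0 < k) (h2 : k < 2 * size t) :
    ¬ BalancedParen ((F t).take k) := by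
  intro hb
  have := (take_F t k).2 h0 h2
  have := hb.1
  omega

theorem isMatch_root (t : RoseTree) : IsMatch (F t) 0 (2 * size t - 1) := by
  have h1 := one_le_size t
  have hlen := length_F t
  refine ⟨by omega, by omega, ?_, ?_⟩
  · have : seg (F t) 0 (2 * size t - 1) = F t := by
      unfold seg; rw [List.drop_zero, List.take_of_length_le (by omega)]
    rw [this]; exact balanced_F t
  · intro r hr hr2
    have : seg (F t) 0 r = (F t).take (r+1) := by
      unfold seg; rw [List.drop_zero]; norm_num
    rw [this]
    exact not_balanced_take t (r+1) (by omega) (by omega)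

end RoseTree

theorem seg_append_right {S Y : List Bool} {p q : ℕ} (hpq : p ≤ q) (hq : q < S.length) :
    seg (S ++ Y) p q = seg S p q := by
  unfold seg
  rw [List.drop_append_of_le_length (by omega)]
  rw [List.take_append_of_le_length (by simp; omega)]

theorem seg_append_left {X S : List Bool} {p q : ℕ} :
    seg (X ++ S) (X.length + p) (X.length + q) = seg S p q := by
  unfold seg
  rw [List.drop_append]
  rw [List.drop_of_length_le (by omega)]
  have : X.length + p - X.length = p := by omega
  rw [this]
  simp
  congr 1
  omega

theorem isMatch_append_right {S Y : List Bool} {p q : ℕ} (h : IsMatch S p q) :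
    IsMatch (S ++ Y) p q := by
  obtain ⟨h1, h2, h3, h4⟩ := h
  refine ⟨h1, by simp; omega, ?_, ?_⟩
  · rw [seg_append_right (by omega) h2]; exact h3
  · intro r hr1 hr2
    rw [seg_append_right (by omega) (by omega)]
    exact h4 r hr1 hr2

theorem isMatch_append_left {X S : List Bool} {p q : ℕ} (h : IsMatch S p q) :
    IsMatch (X ++ S) (X.length + p) (X.length + q) := by
  obtain ⟨h1, h2, h3, h4⟩ := h
  refine ⟨by omega, by simp; omega, ?_, ?_⟩
  · rw [seg_append_left]; exact h3
  · intro r hr1 hr2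
    have hr : r = X.length + (r - X.length) := by omega
    rw [hr, seg_append_left]
    exact h4 _ (by omega) (by omega)
namespace RoseTree

def shiftE (d : ℕ) (e : List ℕ × ℕ × ℕ) : List ℕ × ℕ × ℕ := (e.1, e.2.1 + d, e.2.2 + d)
def consE (k : ℕ) (e : List ℕ × ℕ × ℕ) : List ℕ × ℕ × ℕ := (k :: e.1, e.2.1, e.2.2)

mutual
def entries : RoseTree → List (List ℕ × ℕ × ℕ)
  | .node ts => ([], 0, 2 * sizeList ts + 1) :: (entriesL 0 ts).map (shiftE 1)
def entriesL : ℕ → List RoseTree → List (List ℕ × ℕ × ℕ)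
  | _, [] => []
  | k, t :: ts => (entries t).map (consE k) ++ (entriesL (k+1) ts).map (shiftE (2 * size t))
end

mutual
theorem length_entries (t : RoseTree) : (entries t).length = size t := by
  match t with
  | .node ts => simp [entries, size, length_entriesL ts 0]; omega
theorem length_entriesL (ts : List RoseTree) (k : ℕ) : (entriesL k ts).length = sizeList ts := by
  match ts with
  | [] => simp [entriesL, sizeList]
  | t :: ts => simp [entriesL, sizeList, length_entries t, length_entriesL ts (k+1)]
end

mutual
theorem fst_entries (t : RoseTree) : (entries t).map Prod.fst = preorderPaths t := by
  match t with
  | .node ts =>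
    simp only [entries, preorderPaths, List.map_cons, List.map_map, List.cons.injEq]
    refine ⟨trivial, ?_⟩
    have : (Prod.fst ∘ shiftE 1) = (Prod.fst : List ℕ × ℕ × ℕ → List ℕ) := by
      funext e; rfl
    rw [this, fst_entriesL ts 0]
theorem fst_entriesL (ts : List RoseTree) (k : ℕ) :
    (entriesL k ts).map Prod.fst = preorderPathsAux k ts := by
  match ts with
  | [] => simp [entriesL, preorderPathsAux]
  | t :: ts =>
    simp only [entriesL, preorderPathsAux, List.map_append, List.map_map]
    congr 1
    · rw [show (Prod.fst ∘ consE k) = (fun e : List ℕ × ℕ × ℕ => k :: e.1) by funext e; rfl]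
      rw [← fst_entries t, List.map_map]
      rfl
    · rw [show (Prod.fst ∘ shiftE (2 * size t)) = (Prod.fst : List ℕ × ℕ × ℕ → List ℕ) by funext e; rfl]
      exact fst_entriesL ts (k+1)
end

theorem heads_entriesL (ts : List RoseTree) (k : ℕ) :
    ∀ e ∈ entriesL k ts, ∃ h r, e.1 = h :: r ∧ k ≤ h := by
  induction ts generalizing k with
  | nil => simp [entriesL]
  | cons t ts ih =>
    intro e he
    rw [entriesL] at he
    rcases List.mem_append.1 he with h | h
    · obtain ⟨e', _, rfl⟩ := List.mem_map.1 h
      exact ⟨k, e'.1, rfl, le_refl k⟩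
    · obtain ⟨e', he', rfl⟩ := List.mem_map.1 h
      obtain ⟨a, r, h1, h2⟩ := ih (k+1) e' he'
      exact ⟨a, r, h1, by omega⟩

end RoseTree
namespace RoseTree

structure Good (S : List Bool) (E : List (List ℕ × ℕ × ℕ)) : Prop where
  opens : ∀ (m : ℕ) (e : List ℕ × ℕ × ℕ), E[m]? = some e →
    e.2.1 < S.length ∧ S.getD e.2.1 false = true ∧ (S.take e.2.1).count true = m
  mat : ∀ (m : ℕ) (e : List ℕ × ℕ × ℕ), E[m]? = some e → IsMatch S e.2.1 e.2.2
  ord : ∀ (a b : ℕ) (ea eb : List ℕ × ℕ × ℕ), a < b → E[a]? = some ea → E[b]? = some eb →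
      ea.2.1 < eb.2.1 ∧ ¬ eb.1 <+: ea.1 ∧
      (ea.1 <+: eb.1 → eb.2.2 < ea.2.2) ∧ (¬ ea.1 <+: eb.1 → ea.2.2 < eb.2.1)

mutual
theorem good_entries (t : RoseTree) : Good (F t) (entries t) := by
  match t with
  | .node ts =>
    have hG := good_entriesL ts 0
    have hA : (FList ts).length = 2 * sizeList ts := length_FList ts
    have hS : F (.node ts) = true :: (FList ts ++ [false]) := by rw [F]; simp
    have hSlen : (F (.node ts)).length = 2 * sizeList ts + 2 := by
      rw [length_F]; simp [size]; ring
    have hget : ∀ m : ℕ, (entries (.node ts))[m+1]? =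
        ((entriesL 0 ts)[m]?).map (shiftE 1) := by
      intro m; rw [entries]; simp [List.getElem?_map]
    have hget0 : (entries (.node ts))[0]? = some ([], 0, 2 * sizeList ts + 1) := by
      rw [entries]; rfl
    constructor
    · intro m e hme
      match m with
      | 0 =>
        rw [hget0] at hme
        obtain rfl : ([], 0, 2 * sizeList ts + 1) = e := by injection hme
        refine ⟨?_, ?_, by simp⟩
        · show (0:ℕ) < (F (.node ts)).length; omega
        · rw [hS]; rfl
      | m + 1 =>
        rw [hget m] at hme
        obtain ⟨e', he', rfl⟩ := Option.map_eq_some_iff.1 hme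
        obtain ⟨h1, h2, h3⟩ := hG.opens m e' he'
        refine ⟨by simp [shiftE]; omega, ?_, ?_⟩
        · show (F (.node ts)).getD (e'.2.1 + 1) false = true
          rw [hS, List.getD_cons_succ, List.getD_append _ _ _ _ h1]
          exact h2
        · show ((F (.node ts)).take (e'.2.1 + 1)).count true = m + 1
          rw [hS, List.take_succ_cons, List.count_cons]
          rw [List.take_append_of_le_length (by omega)]
          simp [h3]
    · intro m e hme
      match m with
      | 0 =>
        rw [hget0] at hme
        obtain rfl : ([], 0, 2 * sizeList ts + 1) = e := by injection hme
        have h := isMatch_root (.node ts)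
        have : 2 * size (RoseTree.node ts) - 1 = 2 * sizeList ts + 1 := by
          simp [size]; omega
        rw [this] at h
        exact h
      | m + 1 =>
        rw [hget m] at hme
        obtain ⟨e', he', rfl⟩ := Option.map_eq_some_iff.1 hme
        have h := hG.mat m e' he'
        have h2 := isMatch_append_right (Y := [false]) h
        have h3 := isMatch_append_left (X := [true]) h2
        simp only [List.singleton_append, List.length_cons, List.length_nil] at h3
        show IsMatch (F (.node ts)) (e'.2.1 + 1) (e'.2.2 + 1)
        rw [hS]
        rw [show e'.2.1 + 1 = 1 + e'.2.1 by omega, show e'.2.2 + 1 = 1 + e'.2.2 by omega]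
        exact h3
    · intro a b ea eb hab ha hb
      match a, b with
      | 0, b + 1 =>
        rw [hget0] at ha
        obtain rfl : ([], 0, 2 * sizeList ts + 1) = ea := by injection ha
        rw [hget b] at hb
        obtain ⟨e', he', rfl⟩ := Option.map_eq_some_iff.1 hb
        obtain ⟨hh, hr, hhead, _⟩ := heads_entriesL ts 0 e' (List.mem_of_getElem? he')
        have hq := (hG.mat b e' he').2.1
        refine ⟨by simp [shiftE], ?_, ?_, ?_⟩
        · show ¬ e'.1 <+: []
          rw [List.prefix_nil, hhead]; simp
        · intro _; show e'.2.2 + 1 < 2 * sizeList ts + 1; omega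
        · intro h; exact absurd List.nil_prefix h
      | a + 1, b + 1 =>
        rw [hget a] at ha
        rw [hget b] at hb
        obtain ⟨ea', hea', rfl⟩ := Option.map_eq_some_iff.1 ha
        obtain ⟨eb', heb', rfl⟩ := Option.map_eq_some_iff.1 hb
        obtain ⟨o1, o2, o3, o4⟩ := hG.ord a b ea' eb' (by omega) hea' heb'
        refine ⟨by simp [shiftE]; omega, o2, ?_, ?_⟩
        · intro h; have := o3 h; simp [shiftE]; omega
        · intro h; have := o4 h; simp [shiftE]; omega
theorem good_entriesL (ts : List RoseTree) (k : ℕ) : Good (FList ts) (entriesL k ts) := by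
  match ts with
  | [] =>
    constructor <;> intro m <;> simp [entriesL]
  | t :: ts =>
    have hGt := good_entries t
    have hGl := good_entriesL ts (k+1)
    have hd : (F t).length = 2 * size t := length_F t
    have hlen1 : ((entries t).map (consE k)).length = size t := by
      simp [length_entries]
    have hcnt : (F t).count true = size t := (count_F t).1
    have hSlen : (FList (t :: ts)).length = 2 * size t + (FList ts).length := by
      rw [FList]; simp [hd]
    have hgetlow : ∀ m : ℕ, m < size t → (entriesL k (t :: ts))[m]? =
        ((entries t)[m]?).map (consE k) := by
      intro m hm
      rw [entriesL, List.getElem?_append_left (by simp [length_entries]; omega), List.getElem?_map]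
    have hgethigh : ∀ m : ℕ, size t ≤ m → (entriesL k (t :: ts))[m]? =
        ((entriesL (k+1) ts)[m - size t]?).map (shiftE (2 * size t)) := by
      intro m hm
      rw [entriesL, List.getElem?_append_right (by simp [length_entries]; omega), List.getElem?_map,
        hlen1]
    constructor
    · intro m e hme
      by_cases hm : m < size t
      · rw [hgetlow m hm] at hme
        obtain ⟨e', he', rfl⟩ := Option.map_eq_some_iff.1 hme
        obtain ⟨h1, h2, h3⟩ := hGt.opens m e' he'
        refine ⟨by simp [consE]; omega, ?_, ?_⟩
        · show (FList (t :: ts)).getD e'.2.1 false = true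
          rw [FList, List.getD_append _ _ _ _ h1]; exact h2
        · show ((FList (t :: ts)).take e'.2.1).count true = m
          rw [FList, List.take_append_of_le_length (by omega)]; exact h3
      · rw [hgethigh m (by omega)] at hme
        obtain ⟨e', he', rfl⟩ := Option.map_eq_some_iff.1 hme
        obtain ⟨h1, h2, h3⟩ := hGl.opens _ e' he'
        refine ⟨by simp [shiftE]; omega, ?_, ?_⟩
        · show (FList (t :: ts)).getD (e'.2.1 + 2 * size t) false = true
          rw [FList, List.getD_append_right _ _ _ _ (by omega),
            show e'.2.1 + 2 * size t - (F t).length = e'.2.1 by omega]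
          exact h2
        · show ((FList (t :: ts)).take (e'.2.1 + 2 * size t)).count true = m
          rw [FList, List.take_append, List.take_of_length_le (by omega),
            List.count_append, hcnt,
            show e'.2.1 + 2 * size t - (F t).length = e'.2.1 by omega, h3]
          omega
    · intro m e hme
      by_cases hm : m < size t
      · rw [hgetlow m hm] at hme
        obtain ⟨e', he', rfl⟩ := Option.map_eq_some_iff.1 hme
        have h := hGt.mat m e' he'
        show IsMatch (FList (t :: ts)) e'.2.1 e'.2.2
        rw [FList]
        exact isMatch_append_right h
      · rw [hgethigh m (by omega)] at hme
        obtain ⟨e', he', rfl⟩ := Option.map_eq_some_iff.1 hme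
        have h := hGl.mat _ e' he'
        have h2 := isMatch_append_left (X := F t) h
        show IsMatch (FList (t :: ts)) (e'.2.1 + 2 * size t) (e'.2.2 + 2 * size t)
        rw [FList, show e'.2.1 + 2 * size t = (F t).length + e'.2.1 by omega,
          show e'.2.2 + 2 * size t = (F t).length + e'.2.2 by omega]
        exact h2
    · intro a b ea eb hab ha hb
      by_cases hbs : b < size t
      · -- both low
        rw [hgetlow a (by omega)] at ha
        rw [hgetlow b hbs] at hb
        obtain ⟨ea', hea', rfl⟩ := Option.map_eq_some_iff.1 ha
        obtain ⟨eb', heb', rfl⟩ := Option.map_eq_some_iff.1 hb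
        obtain ⟨o1, o2, o3, o4⟩ := hGt.ord a b ea' eb' hab hea' heb'
        refine ⟨o1, ?_, ?_, ?_⟩
        · show ¬ (k :: eb'.1) <+: (k :: ea'.1)
          rw [List.cons_prefix_cons]; tauto
        · show (k :: ea'.1) <+: (k :: eb'.1) → _
          rw [List.cons_prefix_cons]; intro h; exact o3 h.2
        · show ¬ (k :: ea'.1) <+: (k :: eb'.1) → _
          rw [List.cons_prefix_cons]
          intro h
          exact o4 (fun hp => h ⟨rfl, hp⟩)
      · by_cases has : a < size t
        · -- a low, b high
          rw [hgetlow a has] at ha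
          rw [hgethigh b (by omega)] at hb
          obtain ⟨ea', hea', rfl⟩ := Option.map_eq_some_iff.1 ha
          obtain ⟨eb', heb', rfl⟩ := Option.map_eq_some_iff.1 hb
          obtain ⟨hh, hr, hhead, hge⟩ := heads_entriesL ts (k+1) eb' (List.mem_of_getElem? heb')
          have hma := hGt.mat a ea' hea'
          have hpa : ea'.2.1 < (F t).length := (hGt.opens a ea' hea').1
          have hqa : ea'.2.2 < (F t).length := hma.2.1
          refine ⟨by simp [consE, shiftE]; omega, ?_, ?_, ?_⟩
          · show ¬ eb'.1 <+: (k :: ea'.1)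
            rw [hhead, List.cons_prefix_cons]
            intro hc
            omega
          · show (k :: ea'.1) <+: eb'.1 → _
            rw [hhead, List.cons_prefix_cons]
            intro hc
            omega
          · intro _
            show ea'.2.2 < eb'.2.1 + 2 * size t
            omega
        · -- both high
          rw [hgethigh a (by omega)] at ha
          rw [hgethigh b (by omega)] at hb
          obtain ⟨ea', hea', rfl⟩ := Option.map_eq_some_iff.1 ha
          obtain ⟨eb', heb', rfl⟩ := Option.map_eq_some_iff.1 hb
          obtain ⟨o1, o2, o3, o4⟩ := hGl.ord _ _ ea' eb' (by omega) hea' heb'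
          refine ⟨by simp [shiftE]; omega, o2, ?_, ?_⟩
          · intro h; have := o3 h; simp [shiftE]; omega
          · intro h; have := o4 h; simp [shiftE]; omega
end

end RoseTree
theorem count_take_mono (S : List Bool) (b : Bool) {m m' : ℕ} (h : m ≤ m') :
    (S.take m).count b ≤ (S.take m').count b := by
  have : S.take m = (S.take m').take m := by rw [List.take_take, min_eq_left h]
  rw [this]
  exact List.Sublist.count_le b (List.take_sublist _ _)

theorem isNthOpen_unique {S : List Bool} {i p p' : ℕ} (hi : 1 ≤ i)
    (h : IsNthOpen S i p) (h' : IsNthOpen S i p') : p = p' := by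
  obtain ⟨h1, h2, h3⟩ := h
  obtain ⟨h1', h2', h3'⟩ := h'
  have key : ∀ a b : ℕ, a < S.length → S.getD a false = true →
      (S.take a).count true = i - 1 → (S.take b).count true = i - 1 → ¬ a < b := by
    intro a b ha hga hca hcb hab
    have hg : S[a]? = some true := by
      rcases hx : S[a]? with _ | c
      · rw [List.getElem?_eq_none_iff] at hx; omega
      · have hc : S.getD a false = c := by rw [List.getD_eq_getElem?_getD, hx]; rfl
        rw [hga] at hc; rw [← hc]
    have hsucc : (S.take (a+1)).count true = i := by
      rw [List.take_succ, hg, List.count_append]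
      simp [hca]; omega
    have := count_take_mono S true (show a + 1 ≤ b by omega)
    omega
  rcases lt_trichotomy p p' with h | h | h
  · exact absurd h (key p p' h1 h2 h3 h3')
  · exact h
  · exact absurd h (key p' p h1' h2' h3' h3)

theorem isMatch_unique {S : List Bool} {p q q' : ℕ}
    (h : IsMatch S p q) (h' : IsMatch S p q') : q = q' := by
  rcases lt_trichotomy q q' with hlt | heq | hlt
  · exact absurd h.2.2.1 (h'.2.2.2 q h.1 hlt)
  · exact heq
  · exact absurd h'.2.2.1 (h.2.2.2 q' h'.1 hlt)

/-- Let `T` be a rose tree with `n` nodes and preorder listing `v₁,…,v_n` (nodes identified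
with their paths from the root). For `1 ≤ i ≤ n` let `p_i` be the position of the `i`-th
'(' in `F T` and `q_i` the position of its matching ')'. Then for all `i ≠ j`, the pair for
`v_i` precedes the pair for `v_j` (i.e. `q_i < p_j`) if and only if `v_i` and `v_j` are not
related in `T` (neither is an ancestor of the other) and `i < j`. -/
theorem preceding_iff_unrelated (T : RoseTree) (n : ℕ) (hn : n = T.size)
    (i j : ℕ) (hi1 : 1 ≤ i) (hin : i ≤ n) (hj1 : 1 ≤ j) (hjn : j ≤ n) (hij : i ≠ j)
    (pi qi pj qj : ℕ)
    (hpi : IsNthOpen (RoseTree.F T) i pi) (hqi : IsMatch (RoseTree.F T) pi qi)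
    (hpj : IsNthOpen (RoseTree.F T) j pj) (hqj : IsMatch (RoseTree.F T) pj qj)
    (vi vj : List ℕ)
    (hvi : (RoseTree.preorderPaths T)[i - 1]? = some vi)
    (hvj : (RoseTree.preorderPaths T)[j - 1]? = some vj) :
    qi < pj ↔ (¬ vi <+: vj ∧ ¬ vj <+: vi ∧ i < j) := by
  have hG := RoseTree.good_entries T
  have hfst := RoseTree.fst_entries T
  rw [← hfst, List.getElem?_map] at hvi hvj
  obtain ⟨ei, hei, hei1⟩ := Option.map_eq_some_iff.1 hvi
  obtain ⟨ej, hej, hej1⟩ := Option.map_eq_some_iff.1 hvj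
  subst hei1; subst hej1
  have hoi := hG.opens (i-1) ei hei
  have hoj := hG.opens (j-1) ej hej
  have hmi := hG.mat (i-1) ei hei
  have hmj := hG.mat (j-1) ej hej
  have hpi' : pi = ei.2.1 :=
    isNthOpen_unique hi1 hpi ⟨hoi.1, hoi.2.1, hoi.2.2⟩
  subst hpi'
  have hpj' : pj = ej.2.1 :=
    isNthOpen_unique hj1 hpj ⟨hoj.1, hoj.2.1, hoj.2.2⟩
  subst hpj'
  have hqi' : qi = ei.2.2 := isMatch_unique hqi hmi
  subst hqi'
  have hqj' : qj = ej.2.2 := isMatch_unique hqj hmj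
  subst hqj'
  rcases Nat.lt_or_ge (i-1) (j-1) with hab | hab
  · obtain ⟨o1, o2, o3, o4⟩ := hG.ord (i-1) (j-1) ei ej hab hei hej
    constructor
    · intro hlt
      refine ⟨?_, o2, by omega⟩
      intro hpre
      have := o3 hpre
      have := hmj.1
      omega
    · rintro ⟨h1, _, _⟩
      exact o4 h1
  · have hba : j - 1 < i - 1 := by omega
    obtain ⟨o1, o2, o3, o4⟩ := hG.ord (j-1) (i-1) ej ei hba hej hei
    have := hmi.1
    constructor
    · intro hlt; omega
    · rintro ⟨_, _, h3⟩; omega
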